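/- Let G be a finite abelian group, let l be a positive integer, and let A be a finite subset of G with 0 ∈ A and (l+1)·|A| ≥ 2·|G|. Then lA = ⟨A⟩, i.e., the l-fold sumset of A equals the subgroup generated by A. -/

import Mathlib

open Finset Pointwise

set_option linter.unusedSectionVars false

section Atoms
variable {G : Type*} [AddCommGroup G] [Fintype G] [DecidableEq G]

def adm (A X : Finset G) : Prop := X.Nonempty ∧ X + A ≠ univ

def bdSet (A : Finset G) : Set ℕ := {d | ∃ X : Finset G, adm A X ∧ (X + A).card = X.card + d}

noncomputable def kap (A : Finset G) : ℕ := sInf (bdSet A)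

def frag (A X : Finset G) : Prop := adm A X ∧ (X + A).card = X.card + kap A

noncomputable def alp (A : Finset G) : ℕ := sInf (Finset.card '' {X | frag A X})

def atom (A X : Finset G) : Prop := frag A X ∧ X.card = alp A

variable {A X Y : Finset G}

lemma singleton_add_A (h0 : (0:G) ∈ A) : ({0} : Finset G) + A = A := by
  rw [Finset.singleton_zero, zero_add]

lemma subset_add_self (h0 : (0:G) ∈ A) : X ⊆ X + A := fun x hx => by
  simpa using Finset.add_mem_add hx h0

lemma kap_le (h0 : (0:G) ∈ A) (hX : adm A X) : X.card + kap A ≤ (X + A).card := by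
  have hle : X.card ≤ (X + A).card := card_le_card (subset_add_self h0)
  have h1 : ((X + A).card - X.card) ∈ bdSet A := ⟨X, hX, by omega⟩
  have := Nat.sInf_le h1
  unfold kap; omega

lemma adm_zero (hAu : A ≠ univ) (h0 : (0:G) ∈ A) : adm A ({0} : Finset G) :=
  ⟨⟨0, mem_singleton_self 0⟩, by rw [singleton_add_A h0]; exact hAu⟩

lemma exists_frag (hAu : A ≠ univ) (h0 : (0:G) ∈ A) : ∃ X, frag A X := by
  have hne : (bdSet A).Nonempty := by
    refine ⟨A.card - #({0}:Finset G), {0}, adm_zero hAu h0, ?_⟩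
    have : #({0}:Finset G) ≤ A.card := card_le_card (by simpa using h0)
    rw [singleton_add_A h0]; omega
  obtain ⟨X, hX, hcard⟩ := Nat.sInf_mem hne
  exact ⟨X, hX, hcard⟩

lemma alp_le (hX : frag A X) : alp A ≤ X.card := Nat.sInf_le ⟨X, hX, rfl⟩

lemma exists_atom (hAu : A ≠ univ) (h0 : (0:G) ∈ A) : ∃ X, atom A X := by
  have hne : (Finset.card '' {X | frag A X}).Nonempty := by
    obtain ⟨X, hX⟩ := exists_frag hAu h0
    exact ⟨X.card, X, hX, rfl⟩
  obtain ⟨X, hX, hcard⟩ := Nat.sInf_mem hne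
  exact ⟨X, hX, hcard⟩

lemma singleton_add_ne_univ (g : G) {S : Finset G} (hS : S ≠ univ) : {g} + S ≠ univ := by
  intro h
  apply hS
  have := card_singleton_add g S
  rw [h] at this
  exact Finset.eq_univ_of_card _ this.symm

lemma frag_translate (g : G) (hX : frag A X) : frag A ({g} + X) := by
  obtain ⟨⟨hne, hnu⟩, hcard⟩ := hX
  have hassoc : ({g} + X) + A = {g} + (X + A) := add_assoc _ _ _
  refine ⟨⟨?_, ?_⟩, ?_⟩
  · obtain ⟨x, hx⟩ := hne
    exact ⟨g + x, Finset.add_mem_add (mem_singleton_self g) hx⟩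
  · rw [hassoc]; exact singleton_add_ne_univ g hnu
  · rw [hassoc, card_singleton_add, card_singleton_add, hcard]

lemma atom_translate (g : G) (hX : atom A X) : atom A ({g} + X) :=
  ⟨frag_translate g hX.1, by rw [card_singleton_add]; exact hX.2⟩

end Atoms

section Atoms2
variable {G : Type*} [AddCommGroup G] [Fintype G] [DecidableEq G]
variable {A X Y S T : Finset G}

lemma ne_univ_of_sub (hsub : S ⊆ T) (hT : T ≠ univ) : S ≠ univ := by
  intro h; exact hT (univ_subset_iff.mp (h ▸ hsub))

lemma zero_mem_neg' (h0 : (0:G) ∈ A) : (0:G) ∈ -A := by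
  simpa using Finset.neg_mem_neg h0

lemma neg_ne_univ (hAu : A ≠ univ) : (-A : Finset G) ≠ univ := by
  intro h
  apply hAu
  apply Finset.eq_univ_of_card
  rw [← Finset.card_neg, h, Finset.card_univ]

lemma compl_sub_aux (hY : Y + A ≠ univ) :
    (univ \ (Y + A)) + (-A) ⊆ univ \ Y := by
  intro z hz
  rw [Finset.mem_add] at hz
  obtain ⟨y, hy, b, hb, rfl⟩ := hz
  rw [Finset.mem_neg] at hb
  obtain ⟨a, ha, rfl⟩ := hb
  rw [Finset.mem_sdiff] at hy ⊢
  refine ⟨mem_univ _, fun hzY => hy.2 ?_⟩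
  have : y + -a + a ∈ Y + A := Finset.add_mem_add hzY ha
  simpa using this

lemma compl_nonempty (hY : Y + A ≠ univ) : (univ \ (Y + A)).Nonempty := by
  rw [Finset.sdiff_nonempty]
  intro h
  exact hY (univ_subset_iff.mp h)

lemma kap_neg_le (h0 : (0:G) ∈ A) (hAu : A ≠ univ) : kap (-A) ≤ kap A := by
  obtain ⟨X, ⟨hXne, hXnu⟩, hXc⟩ := exists_frag hAu h0
  set Y := univ \ (X + A) with hYdef
  have hYne : Y.Nonempty := compl_nonempty hXnu
  have hsub : Y + (-A) ⊆ univ \ X := compl_sub_aux hXnu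
  have hXne' : (univ \ X) ≠ univ := by
    intro h
    obtain ⟨x, hx⟩ := hXne
    have : x ∈ univ \ X := by rw [h]; exact mem_univ x
    rw [Finset.mem_sdiff] at this
    exact this.2 hx
  have hadm : adm (-A) Y := ⟨hYne, ne_univ_of_sub hsub hXne'⟩
  have h1 : Y.card + kap (-A) ≤ (Y + (-A)).card := kap_le (zero_mem_neg' h0) hadm
  have h2 : (Y + (-A)).card ≤ (univ \ X).card := card_le_card hsub
  have h3 : Y.card = Fintype.card G - (X + A).card := by
    rw [hYdef, card_sdiff_of_subset (subset_univ _), card_univ]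
  have h4 : (univ \ X).card = Fintype.card G - X.card := by
    rw [card_sdiff_of_subset (subset_univ _), card_univ]
  have h5 : (X + A).card ≤ Fintype.card G := by rw [← card_univ]; exact card_le_univ _
  have h6 : X.card ≤ (X+A).card := card_le_card (subset_add_self h0)
  omega

lemma kap_neg (h0 : (0:G) ∈ A) (hAu : A ≠ univ) : kap (-A) = kap A := by
  have h1 := kap_neg_le h0 hAu
  have h2 := kap_neg_le (zero_mem_neg' h0) (neg_ne_univ hAu)
  rw [neg_neg] at h2
  omega

lemma atom_subset_of_inter (h0 : (0:G) ∈ A) (hle : alp A ≤ alp (-A)) (hX : atom A X)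
    (hY : frag A Y) (hXY : (X ∩ Y).Nonempty) : X ⊆ Y := by
  by_contra hns
  have hIlt : (X ∩ Y).card < X.card := by
    refine card_lt_card (Finset.ssubset_iff_subset_ne.mpr ⟨inter_subset_left, fun h => hns ?_⟩)
    exact Finset.inter_eq_left.mp h
  obtain ⟨⟨hXne, hXnu⟩, hXc⟩ := hX.1
  obtain ⟨⟨hYne, hYnu⟩, hYc⟩ := hY
  have hAu : A ≠ univ := by
    intro h
    apply hYnu
    apply univ_subset_iff.mp
    intro g _
    obtain ⟨y, hy⟩ := hYne
    have : y + (g - y) ∈ Y + A := Finset.add_mem_add hy (h ▸ mem_univ _)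
    simpa using this
  have hIadm : adm A (X ∩ Y) :=
    ⟨hXY, ne_univ_of_sub (add_subset_add_right inter_subset_left) hXnu⟩
  have hIle : (X ∩ Y).card + kap A ≤ ((X ∩ Y) + A).card := kap_le h0 hIadm
  have hIsub : (X ∩ Y) + A ⊆ (X + A) ∩ (Y + A) :=
    subset_inter (add_subset_add_right inter_subset_left)
      (add_subset_add_right inter_subset_right)
  have hUeq : (X ∪ Y) + A = (X + A) ∪ (Y + A) := Finset.union_add
  have e2 := Finset.card_union_add_card_inter (X + A) (Y + A)
  have e3 : ((X ∩ Y) + A).card ≤ ((X + A) ∩ (Y + A)).card := card_le_card hIsub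
  have e5 := Finset.card_union_add_card_inter X Y
  by_cases hUuniv : (X ∪ Y) + A = univ
  · -- the union covers everything: pass to the complement fragment for -A
    set Y' := univ \ (Y + A) with hY'def
    have hY'ne : Y'.Nonempty := compl_nonempty hYnu
    have hsub' : Y' + (-A) ⊆ univ \ Y := compl_sub_aux hYnu
    have hYne' : (univ \ Y) ≠ univ := by
      intro h
      obtain ⟨y, hy⟩ := hYne
      have : y ∈ univ \ Y := by rw [h]; exact mem_univ y
      rw [Finset.mem_sdiff] at this
      exact this.2 hy
    have hadm' : adm (-A) Y' := ⟨hY'ne, ne_univ_of_sub hsub' hYne'⟩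
    have l1 : Y'.card + kap (-A) ≤ (Y' + (-A)).card := kap_le (zero_mem_neg' h0) hadm'
    have l2 : (Y' + (-A)).card ≤ (univ \ Y).card := card_le_card hsub'
    have l3 : Y'.card = Fintype.card G - (Y + A).card := by
      rw [hY'def, card_sdiff_of_subset (subset_univ _), card_univ]
    have l4 : (univ \ Y).card = Fintype.card G - Y.card := by
      rw [card_sdiff_of_subset (subset_univ _), card_univ]
    have l5 : (Y + A).card ≤ Fintype.card G := by rw [← card_univ]; exact card_le_univ _
    have hkn : kap (-A) = kap A := kap_neg h0 hAu
    have hfrag' : frag (-A) Y' := ⟨hadm', by omega⟩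
    have halp' : alp (-A) ≤ Y'.card := alp_le hfrag'
    have hcardU : ((X + A) ∪ (Y + A)).card = Fintype.card G := by
      rw [← hUeq, hUuniv, card_univ]
    have hXYpos : 0 < (X ∩ Y).card := card_pos.mpr hXY
    have hXalp : X.card = alp A := hX.2
    omega
  · have hUadm : adm A (X ∪ Y) :=
      ⟨hXne.mono subset_union_left, hUuniv⟩
    have e1 : (X ∪ Y).card + kap A ≤ ((X ∪ Y) + A).card := kap_le h0 hUadm
    rw [hUeq] at e1
    have hIfrag : frag A (X ∩ Y) := ⟨hIadm, by omega⟩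
    have := alp_le hIfrag
    have hXalp : X.card = alp A := hX.2
    omega

end Atoms2

section Atoms3
variable {G : Type*} [AddCommGroup G] [Fintype G] [DecidableEq G]
variable {A H : Finset G}

lemma add_univ_of_nonempty {S : Finset G} (hS : S.Nonempty) : S + (univ : Finset G) = univ := by
  apply univ_subset_iff.mp
  intro g _
  obtain ⟨s, hs⟩ := hS
  have : s + (g - s) ∈ S + univ := Finset.add_mem_add hs (mem_univ _)
  simpa using this

lemma atom_add_closed (h0A : (0:G) ∈ A) (hle : alp A ≤ alp (-A)) (hH : atom A H)
    (h0H : (0:G) ∈ H) : ∀ h ∈ H, ∀ g ∈ H, h + g ∈ H := by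
  intro h hh g hg
  have hatom : atom A ({h} + H) := atom_translate h hH
  have hmem : h ∈ ({h} + H) ∩ H := by
    rw [mem_inter]
    exact ⟨by simpa using Finset.add_mem_add (mem_singleton_self h) h0H, hh⟩
  have hsub : {h} + H ⊆ H := atom_subset_of_inter h0A hle hatom hH.1 ⟨h, hmem⟩
  exact hsub (Finset.add_mem_add (mem_singleton_self h) hg)

lemma neg_mem_of_closed (hcl : ∀ h ∈ H, ∀ g ∈ H, h + g ∈ H) (h0H : (0:G) ∈ H)
    {h : G} (hh : h ∈ H) : -h ∈ H := by
  have hn : ∀ k : ℕ, k • h ∈ H := by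
    intro k
    induction k with
    | zero => simpa using h0H
    | succ n ih => rw [succ_nsmul]; exact hcl _ ih _ hh
  have hc : 0 < Fintype.card G := Fintype.card_pos
  have hcard : (Fintype.card G) • h = 0 := card_nsmul_eq_zero
  have : -h = (Fintype.card G - 1) • h := by
    have : (Fintype.card G - 1) • h + h = 0 := by
      rw [← succ_nsmul]
      have : Fintype.card G - 1 + 1 = Fintype.card G := by omega
      rw [this]; exact hcard
    linear_combination (norm := abel) this.symm
  rw [this]; exact hn _

/-- The key isoperimetric inequality: `|A| ≤ 2 * κ(A)` for a generating set containing 0. -/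
lemma card_le_two_kap_aux (h0 : (0:G) ∈ A) (hAu : A ≠ univ)
    (hgen : AddSubgroup.closure (A : Set G) = ⊤) (hle : alp A ≤ alp (-A)) :
    A.card ≤ 2 * kap A := by
  obtain ⟨X, hX⟩ := exists_atom hAu h0
  obtain ⟨x₀, hx₀⟩ := hX.1.1.1
  set H : Finset G := {-x₀} + X with hHdef
  have hH : atom A H := atom_translate (-x₀) hX
  have h0H : (0:G) ∈ H := by
    have : -x₀ + x₀ ∈ ({-x₀} : Finset G) + X := Finset.add_mem_add (mem_singleton_self _) hx₀
    simpa using this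
  have hcl : ∀ h ∈ H, ∀ g ∈ H, h + g ∈ H := atom_add_closed h0 hle hH h0H
  have hneg : ∀ h ∈ H, -h ∈ H := fun h hh => neg_mem_of_closed hcl h0H hh
  obtain ⟨⟨hHne, hHnu⟩, hHc⟩ := hH.1
  -- A ⊆ H + A
  have hAsub : A ⊆ H + A := by
    intro a ha
    have : (0:G) + a ∈ H + A := Finset.add_mem_add h0H ha
    simpa using this
  -- H ⊆ H + A
  have hHsub : H ⊆ H + A := subset_add_self h0
  by_cases hHA : H + A = H
  · -- then A ⊆ H, so H generates everything: contradiction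
    exfalso
    have hAH : A ⊆ H := hHA ▸ hAsub
    set H' : AddSubgroup G :=
      { carrier := ↑H
        add_mem' := fun {a} {b} ha hb => hcl a ha b hb
        zero_mem' := h0H
        neg_mem' := fun {a} ha => hneg a ha } with hH'def
    have : AddSubgroup.closure (A : Set G) ≤ H' := by
      rw [AddSubgroup.closure_le]
      exact_mod_cast hAH
    rw [hgen] at this
    apply hHnu
    apply univ_subset_iff.mp
    intro g _
    exact hHsub (this (AddSubgroup.mem_top g))
  · -- there is a coset y + H inside H + A disjoint from H
    have hHH : H + H = H := by
      apply Finset.Subset.antisymm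
      · intro z hz
        rw [Finset.mem_add] at hz
        obtain ⟨u, hu, v, hv, rfl⟩ := hz
        exact hcl u hu v hv
      · intro z hz
        have : z + 0 ∈ H + H := Finset.add_mem_add hz h0H
        simpa using this
    have hper : (H + A) + H = H + A := by
      rw [add_comm H A, add_assoc, hHH, add_comm]
    have hex : ∃ y, y ∈ (H + A) \ H := by
      by_contra hc
      push_neg at hc
      apply hHA
      apply Finset.Subset.antisymm _ hHsub
      intro z hz
      by_contra hzH
      exact hc z (Finset.mem_sdiff.mpr ⟨hz, hzH⟩)
    obtain ⟨y, hy⟩ := hex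
    rw [Finset.mem_sdiff] at hy
    have hcoset : {y} + H ⊆ H + A := by
      intro z hz
      rw [Finset.mem_add] at hz
      obtain ⟨u, hu, h, hh, rfl⟩ := hz
      rw [Finset.mem_singleton] at hu
      subst hu
      have : u + h ∈ (H + A) + H := Finset.add_mem_add hy.1 hh
      rwa [hper] at this
    have hdisj : Disjoint ({y} + H) H := by
      rw [Finset.disjoint_left]
      intro z hz hzH
      rw [Finset.mem_add] at hz
      obtain ⟨u, hu, h, hh, rfl⟩ := hz
      rw [Finset.mem_singleton] at hu
      subst hu
      apply hy.2
      have : u + h + -h ∈ H := hcl _ hzH _ (hneg h hh)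
      simpa using this
    have hunion : ({y} + H) ∪ H ⊆ H + A := union_subset hcoset hHsub
    have hcard : ({y} + H).card + H.card ≤ (H + A).card := by
      rw [← card_union_of_disjoint hdisj]
      exact card_le_card hunion
    rw [Finset.card_singleton_add] at hcard
    have hAle : A.card ≤ (H + A).card := card_le_card hAsub
    omega

lemma card_le_two_kap (h0 : (0:G) ∈ A) (hAu : A ≠ univ)
    (hgen : AddSubgroup.closure (A : Set G) = ⊤) : A.card ≤ 2 * kap A := by
  rcases le_total (alp A) (alp (-A)) with hle | hle
  · exact card_le_two_kap_aux h0 hAu hgen hle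
  · have h0' : (0:G) ∈ -A := zero_mem_neg' h0
    have hAu' : (-A : Finset G) ≠ univ := neg_ne_univ hAu
    have hgen' : AddSubgroup.closure ((-A : Finset G) : Set G) = ⊤ := by
      rw [Finset.coe_neg, AddSubgroup.closure_neg]
      exact hgen
    have hle' : alp (-A) ≤ alp (-(-A)) := by rw [neg_neg]; exact hle
    have := card_le_two_kap_aux h0' hAu' hgen' hle'
    rwa [Finset.card_neg, kap_neg h0 hAu] at this

end Atoms3

section Growth
variable {G : Type*} [AddCommGroup G] [Fintype G] [DecidableEq G] {A : Finset G}

def itS (A : Finset G) : ℕ → Finset G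
  | 0 => {0}
  | (k+1) => itS A k + A

lemma itS_one : itS A 1 = A := by
  show itS A 0 + A = A
  show ({0} : Finset G) + A = A
  rw [Finset.singleton_zero, zero_add]

lemma zero_mem_itS (h0 : (0:G) ∈ A) : ∀ k, (0:G) ∈ itS A k
  | 0 => mem_singleton_self 0
  | (k+1) => by
      have : (0:G) + 0 ∈ itS A k + A := Finset.add_mem_add (zero_mem_itS h0 k) h0
      simpa [itS] using this

lemma itS_subset_succ (h0 : (0:G) ∈ A) {k : ℕ} : itS A k ⊆ itS A (k+1) :=
  subset_add_self h0

lemma itS_mono (h0 : (0:G) ∈ A) {k m : ℕ} (h : k ≤ m) : itS A k ⊆ itS A m := by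
  induction m with
  | zero => rw [Nat.le_zero.mp h]
  | succ n ih =>
      rcases Nat.lt_or_ge k (n+1) with h' | h'
      · exact (ih (by omega)).trans (itS_subset_succ h0)
      · have : k = n + 1 := by omega
        rw [this]

theorem itS_univ (h0 : (0:G) ∈ A) (hgen : AddSubgroup.closure (A : Set G) = ⊤) {l : ℕ}
    (hl : 1 ≤ l) (hA : 2 * Fintype.card G ≤ (l + 1) * A.card) : itS A l = univ := by
  by_cases hAu : A = univ
  · apply univ_subset_iff.mp
    rw [← hAu]
    calc A = itS A 1 := itS_one.symm
    _ ⊆ itS A l := itS_mono h0 hl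
  by_contra hne
  have hk := card_le_two_kap h0 hAu hgen
  have hcardA : A.card ≤ Fintype.card G := by rw [← card_univ]; exact card_le_univ _
  have hApos : 0 < A.card := card_pos.mpr ⟨0, h0⟩
  have hl2 : 2 ≤ l := by
    by_contra hc
    have : l = 1 := by omega
    subst this
    have : Fintype.card G ≤ A.card := by omega
    exact hAu (Finset.eq_univ_of_card _ (by omega))
  have hgrow : ∀ k, 1 ≤ k → k ≤ l → (k + 1) * A.card ≤ 2 * (itS A k).card := by
    intro k
    induction k with
    | zero => omega
    | succ m ih =>
        intro _ hml
        rcases Nat.eq_zero_or_pos m with h1 | h1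
        · subst h1
          have hc1 : (itS A (0+1)).card = A.card := by
            rw [Nat.zero_add, itS_one]
          have hmul : (0+1+1) * A.card = A.card + A.card := by ring
          omega
        · have hm1 : 1 ≤ m := by omega
          have hm2 : m ≤ l := by omega
          have hprev := ih hm1 hm2
          have hadm : adm A (itS A m) := by
            refine ⟨⟨0, zero_mem_itS h0 m⟩, ?_⟩
            exact ne_univ_of_sub (itS_mono h0 (by omega : m + 1 ≤ l)) hne
          have := kap_le h0 hadm
          have hstep : (itS A m).card + kap A ≤ (itS A (m+1)).card := this
          have hmul : (m+1+1) * A.card = (m+1) * A.card + A.card := by ring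
          omega
  obtain ⟨x, hx⟩ : ∃ x, x ∉ itS A l := by
    by_contra hc
    push_neg at hc
    exact hne (Finset.eq_univ_iff_forall.mpr hc)
  set Q := (itS A (l-1)).image (fun q => x - q) with hQdef
  have hQcard : Q.card = (itS A (l-1)).card := by
    apply Finset.card_image_of_injective
    intro u v huv
    have := congrArg (fun t => x - t) huv
    simpa using this
  have hdisj : Disjoint A Q := by
    rw [Finset.disjoint_left]
    intro a ha haQ
    rw [hQdef, Finset.mem_image] at haQ
    obtain ⟨q, hq, hqa⟩ := haQ
    apply hx
    have hmem : q + a ∈ itS A (l-1) + A := Finset.add_mem_add hq ha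
    have : itS A (l-1) + A = itS A l := by
      have : l - 1 + 1 = l := by omega
      rw [← this]
      rfl
    rw [this] at hmem
    have : q + a = x := by rw [← hqa]; abel
    rwa [this] at hmem
  have hcards : A.card + (itS A (l-1)).card ≤ Fintype.card G := by
    rw [← hQcard, ← card_union_of_disjoint hdisj, ← card_univ]
    exact card_le_univ _
  have h2 := hgrow (l-1) (by omega) (by omega)
  have hll : l - 1 + 1 = l := by omega
  rw [hll] at h2
  have hmul : (l+1) * A.card = l * A.card + A.card := by ring
  omega

end Growth

section Rep
variable {G : Type*} [AddCommGroup G] [Fintype G] [DecidableEq G]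

lemma mem_itS_rep {B : Finset G} : ∀ {k : ℕ} {y : G}, y ∈ itS B k →
    ∃ f : Fin k → G, (∀ i, f i ∈ B) ∧ ∑ i, f i = y := by
  intro k
  induction k with
  | zero =>
      intro y hy
      have : y = 0 := Finset.mem_singleton.mp hy
      exact ⟨fun i => i.elim0, fun i => i.elim0, by simp [this]⟩
  | succ k ih =>
      intro y hy
      rw [show itS B (k+1) = itS B k + B from rfl, Finset.mem_add] at hy
      obtain ⟨z, hz, b, hb, rfl⟩ := hy
      obtain ⟨f, hf, hsum⟩ := ih hz
      refine ⟨Fin.snoc f b, ?_, ?_⟩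
      · intro i
        refine Fin.lastCases ?_ ?_ i
        · rw [Fin.snoc_last]; exact hb
        · intro j; rw [Fin.snoc_castSucc]; exact hf j
      · rw [Fin.sum_univ_castSucc]
        simp [Fin.snoc_last, Fin.snoc_castSucc, hsum]

end Rep

/-- The `l`-fold sumset `lA = {a₁ + ⋯ + a_l : aᵢ ∈ A}`. -/
def nfoldSumset {G : Type*} [AddCommMonoid G] (l : ℕ) (A : Set G) : Set G :=
  {x | ∃ f : Fin l → G, (∀ i, f i ∈ A) ∧ ∑ i, f i = x}

theorem stmt_13 {G : Type*} [AddCommGroup G] [Fintype G] (l : ℕ) (hl : 1 ≤ l)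
    (A : Set G) (h0 : (0 : G) ∈ A) (hA : 2 * Nat.card G ≤ (l + 1) * A.ncard) :
    nfoldSumset l A = (AddSubgroup.closure A : Set G) := by
  classical
  ext x
  simp only [nfoldSumset, Set.mem_setOf_eq, SetLike.mem_coe]
  constructor
  · rintro ⟨f, hf, rfl⟩
    exact AddSubgroup.sum_mem _ (fun i _ => AddSubgroup.subset_closure (hf i))
  · intro hx
    set K := AddSubgroup.closure A with hKdef
    letI : Fintype ↥K := Fintype.ofFinite ↥K
    set A' : Set ↥K := (Subtype.val) ⁻¹' A with hA'def
    set Af : Finset ↥K := A'.toFinset with hAfdef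
    have hAf0 : (0 : ↥K) ∈ Af := by
      rw [hAfdef, Set.mem_toFinset, hA'def]
      simpa using h0
    have hgen : AddSubgroup.closure (Af : Set ↥K) = ⊤ := by
      rw [hAfdef, Set.coe_toFinset, hA'def]
      exact AddSubgroup.closure_closure_coe_preimage
    have hAsubK : A ⊆ (K : Set G) := AddSubgroup.subset_closure
    have himg : (Subtype.val : ↥K → G) '' A' = A := by
      rw [hA'def]
      ext a
      constructor
      · rintro ⟨⟨b, hbK⟩, hb, rfl⟩
        exact hb
      · intro ha
        exact ⟨⟨a, hAsubK ha⟩, ha, rfl⟩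
    have hcard2 : Af.card = A.ncard := by
      rw [hAfdef, ← Set.ncard_eq_toFinset_card', ← himg]
      rw [Set.ncard_image_of_injective _ Subtype.val_injective]
    have hcard1 : Nat.card ↥K ≤ Nat.card G :=
      Nat.card_le_card_of_injective _ Subtype.val_injective
    have hhyp : 2 * Fintype.card ↥K ≤ (l + 1) * Af.card := by
      rw [← Nat.card_eq_fintype_card, hcard2]
      calc 2 * Nat.card ↥K ≤ 2 * Nat.card G := by omega
      _ ≤ (l + 1) * A.ncard := hA
    have huniv := itS_univ hAf0 hgen hl hhyp
    have hmem : (⟨x, hx⟩ : ↥K) ∈ itS Af l := by rw [huniv]; exact mem_univ _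
    obtain ⟨f, hf, hsum⟩ := mem_itS_rep hmem
    refine ⟨fun i => ((f i : ↥K) : G), fun i => ?_, ?_⟩
    · have := hf i
      rw [hAfdef, Set.mem_toFinset, hA'def] at this
      exact this
    · have := congrArg (Subtype.val : ↥K → G) hsum
      simpa using this
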